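/- Let $L(x) = A_0 + \sum_{j=1}^g A_j x_j$ with $A_j \in \mathbb{C}^{d \times d}$, and suppose there is $\eta > 0$ such that $L(X)^* L(X) \succeq \eta^2 I$ for all tuples $X$ of Hermitian matrices (of all sizes). Set $\varepsilon = \frac{\eta}{2}\left(\sum_{j=1}^g \|A_j\|\right)^{-1}$ (assuming some $A_j \neq 0$). Then for every tuple $X$ of $n \times n$ matrices with $\|\frac{1}{2i}(X_j - X_j^*)\| < \varepsilon$ for all $j$, the matrix $L(X) = A_0 \otimes I + \sum_j A_j \otimes X_j$ is invertible and $\|L(X)^{-1}\| \leq 2/\eta$. -/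

import Mathlib

/-!
Write `X = ℜ X + i ℑ X` with `ℜ X` Hermitian. The hypothesis applied to `ℜ X` gives
`‖L(ℜ X) v‖ ≥ η ‖v‖` for every vector `v`. Since `‖A ⊗ B‖ ≤ ‖A‖ ‖B‖`, the perturbation
`L(X) - L(ℜ X) = ∑ A_j ⊗ i ℑ X_j` has norm at most `∑ ‖A_j‖ ‖ℑ X_j‖ ≤ η / 2`, so
`‖L(X) v‖ ≥ (η / 2) ‖v‖`. A square matrix bounded below in this way is invertible and its
inverse has norm at most `2 / η`.
-/

open Matrix
open scoped ComplexOrder Kronecker Matrix.Norms.L2Operator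

section StarModule

open Complex ComplexStarModule

variable {E : Type*} [NormedAddCommGroup E] [StarAddMonoid E] [NormedSpace ℂ E] [StarModule ℂ E]

lemma imaginaryPart_eq_inv_two_mul_I_smul (a : E) : (ℑ a : E) = (2 * I)⁻¹ • (a - star a) := by
  rw [imaginaryPart_apply_coe, ← Complex.coe_smul, smul_smul]
  congr 1
  field_simp
  rw [I_sq]
  push_cast
  ring

lemma norm_sub_realPart (a : E) : ‖a - ℜ a‖ = ‖(ℑ a : E)‖ := by
  rw [← (eq_sub_iff_add_eq').mpr (realPart_add_I_smul_imaginaryPart a), norm_smul, norm_I, one_mul]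

end StarModule

lemma ContinuousLinearMap.sub_norm_sub_mul_norm_le_norm_apply {𝕜 E F : Type*}
    [NontriviallyNormedField 𝕜] [SeminormedAddCommGroup E] [SeminormedAddCommGroup F]
    [NormedSpace 𝕜 E] [NormedSpace 𝕜 F]
    {f g : E →L[𝕜] F} {c : ℝ} (hf : ∀ x, c * ‖x‖ ≤ ‖f x‖) (x : E) :
    (c - ‖g - f‖) * ‖x‖ ≤ ‖g x‖ := by
  have hgf : ‖(g - f) x‖ ≤ ‖g - f‖ * ‖x‖ := (g - f).le_opNorm x
  have htri : ‖f x‖ ≤ ‖g x‖ + ‖(g - f) x‖ := by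
    simpa using norm_sub_le (g x) ((g - f) x)
  linarith [hf x]

namespace Matrix

section Kronecker

variable {𝕜 : Type*} [RCLike 𝕜] {m n : Type*} [Fintype m] [Fintype n] [DecidableEq m]
  [DecidableEq n]

lemma l2_opNorm_le_of_sum_norm_sq_le {M : Matrix n n 𝕜} {b : ℝ} (hb : 0 ≤ b)
    (h : ∀ x : n → 𝕜, ∑ i, ‖(M *ᵥ x) i‖ ^ 2 ≤ b ^ 2 * ∑ i, ‖x i‖ ^ 2) : ‖M‖ ≤ b := by
  refine (toEuclideanCLM (𝕜 := 𝕜) M).opNorm_le_bound hb fun x => ?_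
  refine (sq_le_sq₀ (norm_nonneg _) (by positivity)).mp ?_
  rw [mul_pow, EuclideanSpace.norm_sq_eq, EuclideanSpace.norm_sq_eq]
  exact h x.ofLp

lemma sum_norm_mulVec_sq_le (M : Matrix n n 𝕜) (x : n → 𝕜) :
    ∑ i, ‖(M *ᵥ x) i‖ ^ 2 ≤ ‖M‖ ^ 2 * ∑ i, ‖x i‖ ^ 2 := by
  have h := (toEuclideanCLM (𝕜 := 𝕜) M).le_opNorm (WithLp.toLp 2 x)
  rw [← sq_le_sq₀ (norm_nonneg _) (by positivity), mul_pow, EuclideanSpace.norm_sq_eq,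
    EuclideanSpace.norm_sq_eq] at h
  exact h

lemma l2_opNorm_kronecker_one_le (A : Matrix m m 𝕜) : ‖A ⊗ₖ (1 : Matrix n n 𝕜)‖ ≤ ‖A‖ := by
  refine l2_opNorm_le_of_sum_norm_sq_le (norm_nonneg A) fun x => ?_
  have slice (i : m) (k : n) : ((A ⊗ₖ (1 : Matrix n n 𝕜)) *ᵥ x) (i, k) =
      (A *ᵥ fun j => x (j, k)) i := by
    simp [mulVec, dotProduct, Fintype.sum_prod_type, one_apply]
  calc ∑ q, ‖((A ⊗ₖ (1 : Matrix n n 𝕜)) *ᵥ x) q‖ ^ 2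
      = ∑ k, ∑ i, ‖(A *ᵥ fun j => x (j, k)) i‖ ^ 2 := by
        rw [Fintype.sum_prod_type, Finset.sum_comm]
        simp only [slice]
    _ ≤ ∑ k, ‖A‖ ^ 2 * ∑ j, ‖x (j, k)‖ ^ 2 :=
        Finset.sum_le_sum fun k _ => sum_norm_mulVec_sq_le A _
    _ = ‖A‖ ^ 2 * ∑ q, ‖x q‖ ^ 2 := by
        rw [← Finset.mul_sum, Fintype.sum_prod_type, Finset.sum_comm]

lemma l2_opNorm_one_kronecker_le (B : Matrix n n 𝕜) : ‖(1 : Matrix m m 𝕜) ⊗ₖ B‖ ≤ ‖B‖ := by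
  refine l2_opNorm_le_of_sum_norm_sq_le (norm_nonneg B) fun x => ?_
  have slice (i : m) (k : n) : (((1 : Matrix m m 𝕜) ⊗ₖ B) *ᵥ x) (i, k) =
      (B *ᵥ fun l => x (i, l)) k := by
    simp [mulVec, dotProduct, Fintype.sum_prod_type, one_apply]
  calc ∑ q, ‖(((1 : Matrix m m 𝕜) ⊗ₖ B) *ᵥ x) q‖ ^ 2
      = ∑ i, ∑ k, ‖(B *ᵥ fun l => x (i, l)) k‖ ^ 2 := by
        rw [Fintype.sum_prod_type]
        simp only [slice]
    _ ≤ ∑ i, ‖B‖ ^ 2 * ∑ l, ‖x (i, l)‖ ^ 2 :=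
        Finset.sum_le_sum fun i _ => sum_norm_mulVec_sq_le B _
    _ = ‖B‖ ^ 2 * ∑ q, ‖x q‖ ^ 2 := by
        rw [← Finset.mul_sum, Fintype.sum_prod_type]

lemma l2_opNorm_kronecker_le (A : Matrix m m 𝕜) (B : Matrix n n 𝕜) :
    ‖A ⊗ₖ B‖ ≤ ‖A‖ * ‖B‖ := by
  have factor : A ⊗ₖ B = (A ⊗ₖ (1 : Matrix n n 𝕜)) * ((1 : Matrix m m 𝕜) ⊗ₖ B) := by
    rw [← mul_kronecker_mul, Matrix.mul_one, Matrix.one_mul]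
  rw [factor]
  exact (l2_opNorm_mul _ _).trans <| mul_le_mul (l2_opNorm_kronecker_one_le A)
    (l2_opNorm_one_kronecker_le B) (norm_nonneg _) (norm_nonneg _)

lemma mul_norm_le_norm_toEuclideanCLM_of_posSemidef {M : Matrix n n 𝕜} {c : ℝ} (hc : 0 ≤ c)
    (h : (Mᴴ * M - ((c ^ 2 : ℝ) : 𝕜) • 1).PosSemidef) (x : EuclideanSpace 𝕜 n) :
    c * ‖x‖ ≤ ‖toEuclideanCLM (𝕜 := 𝕜) M x‖ := by
  have dot_self (y : EuclideanSpace 𝕜 n) : star y.ofLp ⬝ᵥ y.ofLp = ((‖y‖ ^ 2 : ℝ) : 𝕜) := by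
    rw [dotProduct_comm, ← EuclideanSpace.inner_eq_star_dotProduct, inner_self_eq_norm_sq_to_K]
    norm_cast
  have hx := h.dotProduct_mulVec_nonneg x.ofLp
  rw [sub_mulVec, dotProduct_sub, ← mulVec_mulVec, smul_mulVec, one_mulVec, dotProduct_smul,
    dotProduct_mulVec, ← star_mulVec, sub_nonneg, smul_eq_mul] at hx
  have hMx := dot_self (toEuclideanCLM (𝕜 := 𝕜) M x)
  rw [ofLp_toEuclideanCLM] at hMx
  rw [hMx, dot_self, ← RCLike.ofReal_mul, RCLike.ofReal_le_ofReal] at hx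
  exact (sq_le_sq₀ (by positivity) (norm_nonneg _)).mp (by rw [mul_pow]; exact hx)

lemma isUnit_and_l2_opNorm_inv_le_of_mul_norm_le {M : Matrix n n 𝕜} {c : ℝ} (hc : 0 < c)
    (h : ∀ x, c * ‖x‖ ≤ ‖toEuclideanCLM (𝕜 := 𝕜) M x‖) : IsUnit M ∧ ‖M⁻¹‖ ≤ c⁻¹ := by
  have hinj : Function.Injective M.mulVec := by
    intro v w hvw
    have hvw' := h (WithLp.toLp 2 (v - w))
    rw [toEuclideanCLM_toLp, mulVec_sub, hvw, sub_self, WithLp.toLp_zero, norm_zero] at hvw'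
    have : ‖WithLp.toLp 2 (v - w)‖ ≤ 0 := nonpos_of_mul_nonpos_right hvw' hc
    simpa [sub_eq_zero] using this
  have hM : IsUnit M := mulVec_injective_iff_isUnit.mp hinj
  refine ⟨hM, (toEuclideanCLM (𝕜 := 𝕜) M⁻¹).opNorm_le_bound (inv_nonneg.mpr hc.le) fun y => ?_⟩
  have hy := h (toEuclideanCLM (𝕜 := 𝕜) M⁻¹ y)
  have hMM : toEuclideanCLM (𝕜 := 𝕜) M (toEuclideanCLM (𝕜 := 𝕜) M⁻¹ y) = y := by
    ext1
    simp [mulVec_mulVec, mul_nonsing_inv _ ((isUnit_iff_isUnit_det M).mp hM)]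
  rw [hMM] at hy
  rwa [inv_mul_eq_div, le_div_iff₀ hc, mul_comm]

end Kronecker

section Pencil

variable {𝕜 ι d n : Type*} [RCLike 𝕜] [Fintype ι] [DecidableEq n]

def linearPencil (A₀ : Matrix d d 𝕜) (A : ι → Matrix d d 𝕜) (X : ι → Matrix n n 𝕜) :
    Matrix (d × n) (d × n) 𝕜 :=
  A₀ ⊗ₖ 1 + ∑ j, A j ⊗ₖ X j

lemma linearPencil_sub_linearPencil (A₀ : Matrix d d 𝕜) (A : ι → Matrix d d 𝕜)
    (X Y : ι → Matrix n n 𝕜) :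
    linearPencil A₀ A X - linearPencil A₀ A Y = ∑ j, A j ⊗ₖ (X j - Y j) := by
  simp only [linearPencil, add_sub_add_left_eq_sub, ← Finset.sum_sub_distrib]
  refine Finset.sum_congr rfl fun j _ => ?_
  rw [sub_eq_iff_eq_add, ← kronecker_add, sub_add_cancel]

variable [Fintype d] [Fintype n] [DecidableEq d]

lemma l2_opNorm_linearPencil_sub_le (A₀ : Matrix d d 𝕜) (A : ι → Matrix d d 𝕜)
    (X Y : ι → Matrix n n 𝕜) :
    ‖linearPencil A₀ A X - linearPencil A₀ A Y‖ ≤ ∑ j, ‖A j‖ * ‖X j - Y j‖ := by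
  rw [linearPencil_sub_linearPencil]
  exact (norm_sum_le _ _).trans (Finset.sum_le_sum fun j _ => l2_opNorm_kronecker_le _ _)

end Pencil

end Matrix

open ComplexStarModule in
theorem stmt_14 (d g : ℕ) (A0 : Matrix (Fin d) (Fin d) ℂ)
    (A : Fin g → Matrix (Fin d) (Fin d) ℂ) (hA : ∃ j, A j ≠ 0)
    (η : ℝ) (hη : 0 < η)
    (hcoer : ∀ (n : ℕ) (X : Fin g → Matrix (Fin n) (Fin n) ℂ), (∀ j, (X j).IsHermitian) →
      ((A0 ⊗ₖ (1 : Matrix (Fin n) (Fin n) ℂ) + ∑ j, A j ⊗ₖ X j)ᴴ *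
          (A0 ⊗ₖ (1 : Matrix (Fin n) (Fin n) ℂ) + ∑ j, A j ⊗ₖ X j) -
        ((η ^ 2 : ℝ) : ℂ) • 1).PosSemidef) :
    ∀ (n : ℕ) (X : Fin g → Matrix (Fin n) (Fin n) ℂ),
      (∀ j, ‖(2 * Complex.I)⁻¹ • (X j - (X j)ᴴ)‖ < η / 2 * (∑ j, ‖A j‖)⁻¹) →
      IsUnit (A0 ⊗ₖ (1 : Matrix (Fin n) (Fin n) ℂ) + ∑ j, A j ⊗ₖ X j) ∧
        ‖(A0 ⊗ₖ (1 : Matrix (Fin n) (Fin n) ℂ) + ∑ j, A j ⊗ₖ X j)⁻¹‖ ≤ 2 / η := by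
  intro n X hX
  change IsUnit (linearPencil A0 A X) ∧ ‖(linearPencil A0 A X)⁻¹‖ ≤ 2 / η
  have hS : 0 < ∑ j, ‖A j‖ := by
    obtain ⟨j, hj⟩ := hA
    exact Finset.sum_pos' (fun _ _ => norm_nonneg _) ⟨j, Finset.mem_univ _, norm_pos_iff.mpr hj⟩
  set R : Fin g → Matrix (Fin n) (Fin n) ℂ := fun j => ℜ (X j)
  have hbelowRe (x) : η * ‖x‖ ≤ ‖toEuclideanCLM (𝕜 := ℂ) (linearPencil A0 A R) x‖ :=
    mul_norm_le_norm_toEuclideanCLM_of_posSemidef hη.le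
      (hcoer n R fun j => (ℜ (X j)).prop.isHermitian) x
  have hclose : ‖linearPencil A0 A X - linearPencil A0 A R‖ ≤ η / 2 := calc
    _ ≤ ∑ j, ‖A j‖ * ‖X j - R j‖ := l2_opNorm_linearPencil_sub_le A0 A X R
    _ ≤ ∑ j, ‖A j‖ * (η / 2 * (∑ j, ‖A j‖)⁻¹) := by
      gcongr with j
      rw [norm_sub_realPart, imaginaryPart_eq_inv_two_mul_I_smul]
      exact (hX j).le
    _ = η / 2 := by rw [← Finset.sum_mul]; field_simp
  have hbelow (x) : η / 2 * ‖x‖ ≤ ‖toEuclideanCLM (𝕜 := ℂ) (linearPencil A0 A X) x‖ := by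
    have := ContinuousLinearMap.sub_norm_sub_mul_norm_le_norm_apply hbelowRe x
      (g := toEuclideanCLM (𝕜 := ℂ) (linearPencil A0 A X))
    rw [← map_sub, l2_opNorm_toEuclideanCLM] at this
    nlinarith [norm_nonneg x]
  simpa [div_eq_mul_inv, mul_comm] using
    isUnit_and_l2_opNorm_inv_le_of_mul_norm_le (half_pos hη) hbelow
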